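/- Let n ≥ 1 and let L, j ∈ ℕ with 1 ≤ L and 0 ≤ j ≤ L. Then ∫₀¹ Π_{nL,c}(α) dα = ∫₀¹ Φ_{n,j}(α)·Π_{n(L−j),c}(α) dα. -/

import Mathlib

/-!
Since `c` is `n`-periodic, `Π_{n(m+1),c}(x) = Π_{n,c}(x) · Π_{nm,c}(2^n x)`. The transfer operator
`T h (x) = 2^{-n} Σ_k h((x+k)/2^n)` is adjoint on `[0,1]` to composition with `x ↦ 2^n x` against
`1`-periodic functions: `∫₀¹ h(x) g(2^n x) dx = ∫₀¹ (T h)(x) g(x) dx`. As `Φ_{n,j+1} = T(Π_{n,c} Φ_{n,j})`,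
each application moves one block of `n` factors of the product into `Φ`.
-/

open Real MeasureTheory Filter

noncomputable section

/-- The perturbing sequence: `c j = 1` if `n ∣ j`, else `0`. -/
def pert (n j : ℕ) : ℕ := if n ∣ j then 1 else 0

/-- The lacunary trigonometric product `Π_{r,γ}(α) = ∏_{j<r} |cos(2^j α π + γ_j π/2)|`. -/
def PiProd (r : ℕ) (γ : ℕ → ℕ) (α : ℝ) : ℝ :=
  ∏ j ∈ Finset.range r, |Real.cos (2 ^ j * α * π + γ j * π / 2)|

/-- The functions `Φ_{n,j}` defined recursively by `Φ_{n,0} = 1` and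
`Φ_{n,j+1}(x) = 2^{-n} Σ_{k<2^n} Π_{n,c}((x+k)/2^n) · Φ_{n,j}((x+k)/2^n)`. -/
def Phi (n : ℕ) : ℕ → ℝ → ℝ
  | 0, _ => 1
  | j + 1, x => ((2:ℝ) ^ n)⁻¹ * ∑ k ∈ Finset.range (2 ^ n),
      PiProd n (pert n) ((x + k) / 2 ^ n) * Phi n j ((x + k) / 2 ^ n)

/-- The transfer (Perron–Frobenius) operator of the map `x ↦ N x` on the circle `ℝ / ℤ`. -/
def transfer (N : ℕ) (h : ℝ → ℝ) (x : ℝ) : ℝ :=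
  (N : ℝ)⁻¹ * ∑ k ∈ Finset.range N, h ((x + k) / N)

lemma continuous_transfer (N : ℕ) {h : ℝ → ℝ} (hh : Continuous h) :
    Continuous (transfer N h) :=
  continuous_const.mul <| continuous_finsetSum _ fun _ _ => hh.comp (by fun_prop)

lemma integral_comp_add_natCast_div (f : ℝ → ℝ) {N : ℕ} (hN : N ≠ 0)
    (k : ℕ) : ∫ x in (0:ℝ)..1, f ((x + k) / N) = N * ∫ x in (k / N : ℝ)..((k + 1) / N), f x := by
  have hN' : (N : ℝ) ≠ 0 := Nat.cast_ne_zero.mpr hN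
  simp_rw [add_div]
  rw [intervalIntegral.integral_comp_div_add f hN', smul_eq_mul, zero_div, zero_add, one_div,
    add_comm]

theorem integral_transfer {f : ℝ → ℝ} (hf : Continuous f) {N : ℕ} (hN : N ≠ 0) :
    ∫ x in (0:ℝ)..1, transfer N f x = ∫ x in (0:ℝ)..1, f x := by
  have hN' : (N : ℝ) ≠ 0 := Nat.cast_ne_zero.mpr hN
  have hint : ∀ k ∈ Finset.range N, IntervalIntegrable (fun x => f ((x + k) / N)) volume 0 1 :=
    fun k _ => (hf.comp (by fun_prop)).intervalIntegrable _ _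
  have hsum := intervalIntegral.sum_integral_adjacent_intervals (f := f) (μ := volume)
    (a := fun k : ℕ => (k : ℝ) / N) (n := N) fun k _ => hf.intervalIntegrable _ _
  simp only [Nat.cast_zero, zero_div, Nat.cast_add_one, div_self hN'] at hsum
  simp only [transfer, intervalIntegral.integral_const_mul, intervalIntegral.integral_finsetSum hint,
    integral_comp_add_natCast_div f hN, ← Finset.mul_sum, inv_mul_cancel_left₀ hN', hsum]

lemma transfer_mul_comp_mul {g : ℝ → ℝ} (hg : Function.Periodic g 1) (N : ℕ) (hN : N ≠ 0)
    (h : ℝ → ℝ) (x : ℝ) :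
    transfer N (fun y => h y * g (N * y)) x = transfer N h x * g x := by
  have hN' : (N : ℝ) ≠ 0 := Nat.cast_ne_zero.mpr hN
  have hshift (k : ℕ) : g (N * ((x + k) / N)) = g x := by
    rw [mul_div_cancel₀ _ hN']
    simpa using hg.nat_mul k x
  simp only [transfer, hshift, mul_assoc, Finset.sum_mul]

theorem integral_mul_comp_mul_eq_integral_transfer_mul {h g : ℝ → ℝ} (hh : Continuous h)
    (hg : Continuous g) (hg1 : Function.Periodic g 1) {N : ℕ} (hN : N ≠ 0) :
    ∫ x in (0:ℝ)..1, h x * g (N * x) = ∫ x in (0:ℝ)..1, transfer N h x * g x := by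
  rw [← integral_transfer (f := fun x => h x * g (N * x)) (by fun_prop) hN]
  simp only [transfer_mul_comp_mul hg1 N hN]

lemma continuous_piProd (r : ℕ) (γ : ℕ → ℕ) : Continuous (PiProd r γ) :=
  continuous_finsetProd _ fun _ _ => (Real.continuous_cos.comp (by fun_prop)).abs

lemma periodic_piProd (r : ℕ) (γ : ℕ → ℕ) : Function.Periodic (PiProd r γ) 1 := by
  intro x
  refine Finset.prod_congr rfl fun j _ => ?_
  have hshift : (2:ℝ) ^ j * (x + 1) * π + γ j * π / 2
      = (2 ^ j * x * π + γ j * π / 2) + ((2 ^ j : ℕ) : ℝ) * π := by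
    push_cast; ring
  rw [hshift, Real.cos_add_nat_mul_pi, abs_mul, abs_pow, abs_neg, abs_one, one_pow, one_mul]

lemma piProd_add (a b : ℕ) (γ : ℕ → ℕ) (x : ℝ) :
    PiProd (a + b) γ x = PiProd a γ x * PiProd b (fun i => γ (a + i)) (2 ^ a * x) := by
  simp only [PiProd, Finset.prod_range_add, pow_add, mul_assoc, mul_left_comm (2 ^ a : ℝ)]

lemma pert_self_add (n : ℕ) : (fun i => pert n (n + i)) = pert n := by
  ext i
  simp [pert, Nat.dvd_add_right (dvd_refl n)]

lemma phi_succ (n j : ℕ) :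
    Phi n (j + 1) = transfer (2 ^ n) (fun y => PiProd n (pert n) y * Phi n j y) := by
  ext x
  simp [Phi, transfer]

lemma continuous_phi (n j : ℕ) : Continuous (Phi n j) := by
  induction j with
  | zero => exact continuous_const
  | succ j ih =>
    rw [phi_succ]
    exact continuous_transfer _ ((continuous_piProd n _).mul ih)

lemma integral_phi_mul_piProd_succ (n j m : ℕ) :
    ∫ x in (0:ℝ)..1, Phi n j x * PiProd (n * (m + 1)) (pert n) x =
      ∫ x in (0:ℝ)..1, Phi n (j + 1) x * PiProd (n * m) (pert n) x := by
  have hsplit (x : ℝ) : Phi n j x * PiProd (n * (m + 1)) (pert n) x =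
      (PiProd n (pert n) x * Phi n j x) * PiProd (n * m) (pert n) (((2 ^ n : ℕ) : ℝ) * x) := by
    rw [mul_add_one, add_comm, piProd_add, pert_self_add]
    push_cast
    ring
  simp only [hsplit, phi_succ]
  exact integral_mul_comp_mul_eq_integral_transfer_mul
    ((continuous_piProd n _).mul (continuous_phi n j)) (continuous_piProd _ _)
    (periodic_piProd _ _) (by positivity)

theorem integral_piProd_eq_integral_phi_mul (n j m : ℕ) :
    ∫ x in (0:ℝ)..1, PiProd (n * (j + m)) (pert n) x =
      ∫ x in (0:ℝ)..1, Phi n j x * PiProd (n * m) (pert n) x := by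
  induction j generalizing m with
  | zero => simp [Phi]
  | succ j ih => rw [add_right_comm, add_assoc, ih, integral_phi_mul_piProd_succ]

theorem integral_PiProd_eq_Phi_general (n : ℕ) (L j : ℕ)
    (hj : j ≤ L) :
    ∫ α in (0:ℝ)..1, PiProd (n * L) (pert n) α =
      ∫ α in (0:ℝ)..1, Phi n j α * PiProd (n * (L - j)) (pert n) α := by
  obtain ⟨m, rfl⟩ := Nat.exists_eq_add_of_le hj
  rw [Nat.add_sub_cancel_left]
  exact integral_piProd_eq_integral_phi_mul n j m

/-- Recurrence relation for the integral of the lacunary product: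
`∫₀¹ Π_{nL,c}(α) dα = ∫₀¹ Φ_{n,j}(α)·Π_{n(L-j),c}(α) dα` for `0 ≤ j ≤ L`. -/
theorem integral_PiProd_eq_Phi (n : ℕ) (hn : 1 ≤ n) (L j : ℕ) (hL : 1 ≤ L)
    (hj : j ≤ L) :
    ∫ α in (0:ℝ)..1, PiProd (n * L) (pert n) α =
      ∫ α in (0:ℝ)..1, Phi n j α * PiProd (n * (L - j)) (pert n) α :=
  integral_PiProd_eq_Phi_general n L j hj

end
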